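/- arXiv:2211.02097 — 3 statements merged into one kernel-verified Lean document; each statement's English description precedes it below -/
import Mathlib

section
/- If Y ~ UW(μ, λ; ρ), then E[ (log Y / log μ)^λ · log(log Y / log μ) ] = (κ + log(-log ρ) - 1)/(λ·log ρ), where κ is the Euler–Mascheroni constant. -/
/-!
With `t = log y / log μ` (so `y = μ ^ t`) and `c = -log ρ > 0`, the expectation becomes
`λ c ∫₀^∞ t ^ (2λ - 1) log t e^{-c t ^ λ} dt`. The substitutions `u = t ^ λ`, `s = c u` turn
this integral into `(λ c)⁻² ∫₀^∞ s (log s - log c) e^{-s} ds = (1 - γ - log c) / (λ c) ^ 2`,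
since `∫₀^∞ s e^{-s} ds = Γ(2) = 1` and, differentiating `Γ(s) = ∫₀^∞ t^(s-1) e^{-t} dt` under
the integral sign, `∫₀^∞ s log s e^{-s} ds = Γ'(2) = 1 - γ`.
-/

open Real MeasureTheory Set Filter Asymptotics

lemma ofReal_cpow_sub_one {t : ℝ} (ht : 0 ≤ t) (s : ℝ) :
    ((t ^ (s - 1) : ℝ) : ℂ) = (t : ℂ) ^ ((s : ℂ) - 1) := by
  rw [Complex.ofReal_cpow ht, Complex.ofReal_sub, Complex.ofReal_one]

lemma integrableOn_rpow_mul_log_mul_exp_neg {s : ℝ} (hs : 0 < s) :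
    IntegrableOn (fun t => t ^ (s - 1) * log t * exp (-t)) (Ioi 0) := by
  have hcont : Continuous fun t : ℝ => ((exp (-t) : ℝ) : ℂ) := by fun_prop
  have hconv : MellinConvergent (fun t : ℝ => log t • ((exp (-t) : ℝ) : ℂ)) s := by
    refine (mellin_hasDerivAt_of_isBigO_rpow (a := s + 1) (b := 0) ?_ ?_ (by simp) ?_
      (by simpa using hs)).1
    · exact hcont.continuousOn.locallyIntegrableOn measurableSet_Ioi
    · rw [← isBigO_norm_left]
      simp_rw [Complex.norm_real, isBigO_norm_left]
      simpa only [neg_one_mul] using (isLittleO_exp_neg_mul_rpow_atTop zero_lt_one _).isBigO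
    · simp_rw [neg_zero, rpow_zero]
      refine isBigO_const_of_tendsto (?_ : Tendsto _ _ (nhds (1 : ℂ))) one_ne_zero
      simpa using (hcont.tendsto 0).mono_left nhdsWithin_le_nhds
  refine IntegrableOn.congr_fun hconv.re (fun t ht => ?_) measurableSet_Ioi
  simp only [← ofReal_cpow_sub_one (le_of_lt ht), Complex.real_smul, smul_eq_mul]
  norm_cast
  rw [← mul_assoc]
  exact Complex.ofReal_re _

lemma hasDerivAt_Gamma_of_pos {s : ℝ} (hs : 0 < s) :
    HasDerivAt Gamma (∫ t in Ioi 0, t ^ (s - 1) * log t * exp (-t)) s := by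
  have hGamma : HasDerivAt Complex.Gamma
      (∫ t : ℝ in Ioi 0, (t : ℂ) ^ ((s : ℂ) - 1) * (log t * exp (-t))) s := by
    refine (Complex.hasDerivAt_GammaIntegral (by simpa using hs)).congr_of_eventuallyEq ?_
    filter_upwards [(isOpen_lt continuous_const Complex.continuous_re).mem_nhds
      (by simpa using hs : (0 : ℝ) < (s : ℂ).re)] with z hz
    exact Complex.Gamma_eq_integral hz
  convert hGamma.real_of_complex using 1
  · funext x
    simp [Complex.Gamma_ofReal]
  · rw [← Complex.ofReal_re (∫ t in Ioi 0, t ^ (s - 1) * log t * exp (-t)),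
      ← integral_complex_ofReal]
    congr 1
    refine setIntegral_congr_fun measurableSet_Ioi fun t ht => ?_
    rw [← ofReal_cpow_sub_one (le_of_lt ht)]
    push_cast
    ring

lemma integral_mul_log_mul_exp_neg :
    ∫ t in Ioi 0, t * log t * exp (-t) = 1 - eulerMascheroniConstant := by
  have hGamma_two : HasDerivAt Gamma (1 - eulerMascheroniConstant) 2 := by
    simpa [one_add_one_eq_two, harmonic_succ, neg_add_eq_sub] using hasDerivAt_Gamma_nat 1
  have h := (hasDerivAt_Gamma_of_pos two_pos).unique hGamma_two
  norm_num at h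
  exact h

lemma integrableOn_mul_exp_neg : IntegrableOn (fun t => t * exp (-t)) (Ioi 0) := by
  refine (GammaIntegral_convergent two_pos).congr_fun (fun t _ => ?_) measurableSet_Ioi
  norm_num [mul_comm]

lemma integral_mul_exp_neg : ∫ t in Ioi 0, t * exp (-t) = 1 := by
  rw [← Gamma_two, Gamma_eq_integral two_pos]
  refine setIntegral_congr_fun measurableSet_Ioi fun t _ => ?_
  norm_num [mul_comm]

lemma integral_mul_log_mul_exp_neg_mul {c : ℝ} (hc : 0 < c) :
    ∫ t in Ioi 0, t * log t * exp (-(c * t)) = (1 - eulerMascheroniConstant - log c) / c ^ 2 := by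
  have hsplit : ∀ u ∈ Ioi (0 : ℝ), u / c * log (u / c) * exp (-u)
      = c⁻¹ * (u * log u * exp (-u)) - c⁻¹ * log c * (u * exp (-u)) := fun u hu => by
    rw [log_div (ne_of_gt hu) hc.ne']
    ring
  calc ∫ t in Ioi 0, t * log t * exp (-(c * t))
      = ∫ t in Ioi 0, c * t / c * log (c * t / c) * exp (-(c * t)) := by
        simp_rw [mul_div_cancel_left₀ _ hc.ne']
    _ = c⁻¹ * ∫ u in Ioi 0, u / c * log (u / c) * exp (-u) := by
        rw [integral_comp_mul_left_Ioi (fun u => u / c * log (u / c) * exp (-u)) 0 hc, mul_zero,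
          smul_eq_mul]
    _ = (1 - eulerMascheroniConstant - log c) / c ^ 2 := by
        have hint : IntegrableOn (fun t => t * log t * exp (-t)) (Ioi 0) := by
          simpa [show (2 : ℝ) - 1 = 1 by norm_num] using
            integrableOn_rpow_mul_log_mul_exp_neg two_pos
        rw [setIntegral_congr_fun measurableSet_Ioi hsplit,
          integral_sub (hint.const_mul _) (integrableOn_mul_exp_neg.const_mul _),
          integral_const_mul, integral_const_mul, integral_mul_log_mul_exp_neg,
          integral_mul_exp_neg]
        field_simp

lemma integral_rpow_mul_log_mul_exp_neg_mul_rpow {c p : ℝ} (hc : 0 < c) (hp : 0 < p) :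
    ∫ t in Ioi 0, t ^ (2 * p - 1) * log t * exp (-(c * t ^ p))
      = (1 - eulerMascheroniConstant - log c) / (p ^ 2 * c ^ 2) := by
  have hsubst : ∀ t ∈ Ioi (0 : ℝ), t ^ (2 * p - 1) * log t * exp (-(c * t ^ p))
      = (p * t ^ (p - 1)) • (p⁻¹ ^ 2 * (t ^ p * log (t ^ p) * exp (-(c * t ^ p)))) :=
    fun t ht => by
      rw [log_rpow ht, smul_eq_mul, show 2 * p - 1 = p + (p - 1) by ring, rpow_add ht]
      field_simp
  rw [setIntegral_congr_fun measurableSet_Ioi hsubst,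
    integral_comp_rpow_Ioi_of_pos (g := fun u => p⁻¹ ^ 2 * (u * log u * exp (-(c * u)))) hp,
    integral_const_mul, integral_mul_log_mul_exp_neg_mul hc]
  field_simp

lemma integral_Ioo_zero_one_comp_log_div_div {a : ℝ} (ha : a < 0) (g : ℝ → ℝ) :
    ∫ y in Ioo 0 1, g (log y / a) / y = -a * ∫ t in Ioi 0, g t := by
  have hderiv : ∀ t ∈ Ioi (0 : ℝ),
      HasDerivWithinAt (fun t => exp (t * a)) (exp (t * a) * a) (Ioi 0) t :=
    fun t _ => ((hasDerivAt_id t).mul_const a).exp.hasDerivWithinAt.congr_deriv (by simp)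
  have hinj : InjOn (fun t => exp (t * a)) (Ioi 0) :=
    fun x _ y _ h => mul_right_cancel₀ ha.ne (exp_injective h)
  have himage : (fun t => exp (t * a)) '' Ioi 0 = Ioo 0 1 := by
    ext y
    refine ⟨?_, fun ⟨hy0, hy1⟩ => ⟨log y / a, div_pos_of_neg_of_neg (log_neg hy0 hy1) ha, ?_⟩⟩
    · rintro ⟨t, ht, rfl⟩
      exact ⟨exp_pos _, exp_lt_one_iff.mpr (mul_neg_of_pos_of_neg ht ha)⟩
    · simp only [div_mul_cancel₀ _ ha.ne, exp_log hy0]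
  rw [← himage, integral_image_eq_integral_abs_deriv_smul measurableSet_Ioi hderiv hinj,
    ← integral_const_mul]
  refine setIntegral_congr_fun measurableSet_Ioi fun t _ => ?_
  rw [log_exp, mul_div_cancel_right₀ _ ha.ne, abs_mul, abs_of_pos (exp_pos _), abs_of_neg ha,
    smul_eq_mul]
  field_simp

theorem uw_moment_Alam_logA
    (ρ μ lam : ℝ) (hρ : ρ ∈ Set.Ioo (0:ℝ) 1) (hμ : μ ∈ Set.Ioo (0:ℝ) 1) (hlam : 0 < lam) :
    ∫ y in (0:ℝ)..1,
      (Real.log y / Real.log μ) ^ lam * Real.log (Real.log y / Real.log μ) *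
        ((lam / y) * (Real.log ρ / Real.log μ) *
          (Real.log y / Real.log μ) ^ (lam - 1) *
          ρ ^ ((Real.log y / Real.log μ) ^ lam))
      = (Real.eulerMascheroniConstant + Real.log (-Real.log ρ) - 1) / (lam * Real.log ρ) := by
  have hlogμ : log μ < 0 := log_neg hμ.1 hμ.2
  have hlogρ : log ρ < 0 := log_neg hρ.1 hρ.2
  set g : ℝ → ℝ := fun t =>
    t ^ lam * log t * (lam * (log ρ / log μ) * t ^ (lam - 1) * ρ ^ t ^ lam) with hg
  have hg_pos : ∀ t ∈ Ioi (0 : ℝ), -log μ * g t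
      = -lam * log ρ * (t ^ (2 * lam - 1) * log t * exp (-(-log ρ * t ^ lam))) := fun t ht => by
    simp only [hg]
    rw [rpow_def_of_pos hρ.1, show 2 * lam - 1 = lam + (lam - 1) by ring, rpow_add ht]
    field_simp [hlogμ.ne]
  calc _ = ∫ y in Ioo 0 1, g (log y / log μ) / y := by
        rw [intervalIntegral.integral_of_le zero_le_one, integral_Ioc_eq_integral_Ioo]
        congr 1 with y
        ring
    _ = -lam * log ρ * ∫ t in Ioi 0, t ^ (2 * lam - 1) * log t * exp (-(-log ρ * t ^ lam)) := by
        rw [integral_Ioo_zero_one_comp_log_div_div hlogμ, ← integral_const_mul,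
          setIntegral_congr_fun measurableSet_Ioi hg_pos, integral_const_mul]
    _ = _ := by
        rw [integral_rpow_mul_log_mul_exp_neg_mul_rpow (neg_pos.mpr hlogρ) hlam]
        field_simp
        ring
end

section
/- Expected second derivative of the UW log-likelihood in μ: if Y ~ UW(μ, λ; ρ) and A = log Y / log μ, then E[ (λ(log μ + 1)(1 + log(ρ)·A^λ) + λ²·log(ρ)·A^λ) / (μ²·(log μ)²) ] = −λ² / (μ²·(log μ)²). -/
/-!
Write `T = (log y / log μ) ^ λ` (`uwExponent`). The distribution function `ρ ^ T` is a
primitive of the density and increases from `0` at `y = 0⁺` to `1` at `y = 1`, so the density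
integrates to `1`. Likewise `(T - 1 / log ρ) ρ ^ T` is a primitive of `T` times the density, which
gives `E[T] = -1 / log ρ`. The integrand is affine in `T`, so the expectation equals
`(λ (log μ + 1) + (λ (log μ + 1) + λ²) log ρ · E[T]) / (μ² log² μ) = -λ² / (μ² log² μ)`.
Both primitives are monotone, which is what makes the improper integrals on `(0, 1]` integrable.
-/

open Real Set Filter Topology MeasureTheory

namespace intervalIntegral

theorem intervalIntegrable_deriv_of_nonneg_of_tendsto {g g' : ℝ → ℝ} {a b ga gb : ℝ}
    (hab : a < b) (hderiv : ∀ x ∈ Ioo a b, HasDerivAt g (g' x) x)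
    (hpos : ∀ x ∈ Ioo a b, 0 ≤ g' x) (ha : Tendsto g (𝓝[>] a) (𝓝 ga))
    (hb : Tendsto g (𝓝[<] b) (𝓝 gb)) :
    IntervalIntegrable g' volume a b := by
  -- Redefining `g` at the endpoints makes it continuous on `[a, b]`.
  set G : ℝ → ℝ := Function.update (Function.update g a ga) b gb
  have hG : ∀ x ∈ Ioo a b, G x = g x := fun x hx => by
    simp only [G]
    rw [Function.update_of_ne hx.2.ne, Function.update_of_ne hx.1.ne']
  have hderivG : ∀ x ∈ Ioo a b, HasDerivAt G (g' x) x := fun x hx =>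
    (hderiv x hx).congr_of_eventuallyEq <|
      eventually_of_mem (Ioo_mem_nhds hx.1 hx.2) hG
  have hcontG : ContinuousOn G (Icc a b) := by
    rw [continuousOn_update_iff, continuousOn_update_iff, Icc_sdiff_right, Ico_sdiff_left]
    refine ⟨⟨fun x hx => (hderiv x hx).continuousAt.continuousWithinAt, fun _ => ?_⟩, fun _ => ?_⟩
    · exact ha.mono_left (nhdsWithin_mono _ Ioo_subset_Ioi_self)
    · refine (hb.congr' ?_).mono_left (nhdsWithin_mono _ Ico_subset_Iio_self)
      filter_upwards [Ioo_mem_nhdsLT hab] with x hx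
      exact (Function.update_of_ne hx.1.ne' _ _).symm
  exact (intervalIntegrable_iff_integrableOn_Ioc_of_le hab.le).2
    (integrableOn_deriv_of_nonneg hcontG hderivG hpos)

end intervalIntegral

theorem tendsto_sub_mul_rpow_atTop {ρ : ℝ} (hρ : ρ ∈ Ioo (0 : ℝ) 1) (c : ℝ) :
    Tendsto (fun z : ℝ => (z - c) * ρ ^ z) atTop (𝓝 0) := by
  have hlog : 0 < -log ρ := neg_pos.2 (log_neg hρ.1 hρ.2)
  have hself : Tendsto (fun z : ℝ => z * ρ ^ z) atTop (𝓝 0) := by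
    refine (tendsto_rpow_mul_exp_neg_mul_atTop_nhds_zero 1 _ hlog).congr fun z => ?_
    rw [rpow_one, rpow_def_of_pos hρ.1, neg_neg, mul_comm (log ρ)]
  have hpow := (tendsto_rpow_atTop_of_base_lt_one ρ (by linarith [hρ.1]) hρ.2).const_mul c
  simpa [sub_mul] using hself.sub hpow

section UnitWeibull

variable {ρ μ lam y : ℝ}

noncomputable def uwExponent (μ lam y : ℝ) : ℝ := (log y / log μ) ^ lam

noncomputable def uwCdf (ρ μ lam y : ℝ) : ℝ := ρ ^ uwExponent μ lam y

noncomputable def uwDensity (ρ μ lam y : ℝ) : ℝ :=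
  (lam / y) * (log ρ / log μ) * (log y / log μ) ^ (lam - 1) * ρ ^ ((log y / log μ) ^ lam)

theorem log_div_log_pos (hμ : μ ∈ Ioo (0 : ℝ) 1) (hy : y ∈ Ioo (0 : ℝ) 1) :
    0 < log y / log μ :=
  div_pos_of_neg_of_neg (log_neg hy.1 hy.2) (log_neg hμ.1 hμ.2)

theorem hasDerivAt_uwExponent (hμ : μ ∈ Ioo (0 : ℝ) 1) (hy : y ∈ Ioo (0 : ℝ) 1) :
    HasDerivAt (uwExponent μ lam) (lam / y / log μ * (log y / log μ) ^ (lam - 1)) y := by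
  refine (((hasDerivAt_log hy.1.ne').div_const (log μ)).rpow_const
    (Or.inl (log_div_log_pos hμ hy).ne')).congr_deriv ?_
  ring

theorem hasDerivAt_uwCdf (hρ : 0 < ρ) (hμ : μ ∈ Ioo (0 : ℝ) 1) (hy : y ∈ Ioo (0 : ℝ) 1) :
    HasDerivAt (uwCdf ρ μ lam) (uwDensity ρ μ lam y) y := by
  refine ((hasStrictDerivAt_const_rpow hρ _).hasDerivAt.comp y
    (hasDerivAt_uwExponent hμ hy)).congr_deriv ?_
  simp only [uwDensity, uwExponent]
  ring

theorem uwDensity_nonneg (hρ : ρ ∈ Ioo (0 : ℝ) 1) (hμ : μ ∈ Ioo (0 : ℝ) 1) (hlam : 0 ≤ lam)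
    (hy : y ∈ Ioo (0 : ℝ) 1) : 0 ≤ uwDensity ρ μ lam y := by
  have hρμ : 0 < log ρ / log μ := div_pos_of_neg_of_neg (log_neg hρ.1 hρ.2) (log_neg hμ.1 hμ.2)
  have hA := (log_div_log_pos hμ hy).le
  unfold uwDensity
  exact mul_nonneg (mul_nonneg (mul_nonneg (div_nonneg hlam hy.1.le) hρμ.le)
    (rpow_nonneg hA _)) (rpow_nonneg hρ.1.le _)

theorem tendsto_uwExponent_nhdsGT_zero (hμ : μ ∈ Ioo (0 : ℝ) 1) (hlam : 0 < lam) :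
    Tendsto (uwExponent μ lam) (𝓝[>] 0) atTop := by
  have hA : Tendsto (fun y => log y / log μ) (𝓝[>] 0) atTop := by
    simpa only [div_eq_mul_inv] using
      tendsto_log_nhdsGT_zero.atBot_mul_const_of_neg (inv_lt_zero.2 (log_neg hμ.1 hμ.2))
  exact (tendsto_rpow_atTop hlam).comp hA

theorem tendsto_uwExponent_nhds_one (hlam : 0 < lam) :
    Tendsto (uwExponent μ lam) (𝓝 1) (𝓝 0) := by
  have hcont : ContinuousAt (uwExponent μ lam) 1 :=
    ((continuousAt_log one_ne_zero).div_const _).rpow_const (Or.inr hlam.le)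
  simpa [uwExponent, zero_rpow hlam.ne'] using hcont.tendsto

theorem tendsto_uwCdf_nhdsGT_zero (hρ : ρ ∈ Ioo (0 : ℝ) 1) (hμ : μ ∈ Ioo (0 : ℝ) 1)
    (hlam : 0 < lam) : Tendsto (uwCdf ρ μ lam) (𝓝[>] 0) (𝓝 0) :=
  (tendsto_rpow_atTop_of_base_lt_one ρ (by linarith [hρ.1]) hρ.2).comp
    (tendsto_uwExponent_nhdsGT_zero hμ hlam)

theorem tendsto_uwCdf_nhds_one (hρ : 0 < ρ) (hlam : 0 < lam) :
    Tendsto (uwCdf ρ μ lam) (𝓝 1) (𝓝 1) := by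
  have h := (continuousAt_const_rpow hρ.ne' (b := 0)).tendsto.comp
    (tendsto_uwExponent_nhds_one (μ := μ) hlam)
  rwa [rpow_zero] at h

theorem intervalIntegrable_uwDensity (hρ : ρ ∈ Ioo (0 : ℝ) 1) (hμ : μ ∈ Ioo (0 : ℝ) 1)
    (hlam : 0 < lam) : IntervalIntegrable (uwDensity ρ μ lam) volume 0 1 :=
  intervalIntegral.intervalIntegrable_deriv_of_nonneg_of_tendsto zero_lt_one
    (fun _ hy => hasDerivAt_uwCdf hρ.1 hμ hy) (fun _ hy => uwDensity_nonneg hρ hμ hlam.le hy)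
    (tendsto_uwCdf_nhdsGT_zero hρ hμ hlam)
    ((tendsto_uwCdf_nhds_one hρ.1 hlam).mono_left nhdsWithin_le_nhds)

theorem integral_uwDensity (hρ : ρ ∈ Ioo (0 : ℝ) 1) (hμ : μ ∈ Ioo (0 : ℝ) 1) (hlam : 0 < lam) :
    ∫ y in (0 : ℝ)..1, uwDensity ρ μ lam y = 1 := by
  rw [intervalIntegral.integral_eq_sub_of_hasDerivAt_of_tendsto zero_lt_one
    (fun _ hy => hasDerivAt_uwCdf hρ.1 hμ hy) (intervalIntegrable_uwDensity hρ hμ hlam)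
    (tendsto_uwCdf_nhdsGT_zero hρ hμ hlam)
    ((tendsto_uwCdf_nhds_one hρ.1 hlam).mono_left nhdsWithin_le_nhds), sub_zero]

theorem hasDerivAt_uwExponent_sub_mul_uwCdf (hρ : ρ ∈ Ioo (0 : ℝ) 1) (hμ : μ ∈ Ioo (0 : ℝ) 1)
    (hy : y ∈ Ioo (0 : ℝ) 1) :
    HasDerivAt (fun y => (uwExponent μ lam y - (log ρ)⁻¹) * uwCdf ρ μ lam y)
      (uwExponent μ lam y * uwDensity ρ μ lam y) y := by
  have hlogρ : log ρ ≠ 0 := (log_neg hρ.1 hρ.2).ne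
  refine (((hasDerivAt_uwExponent (lam := lam) hμ hy).sub_const (log ρ)⁻¹).mul
    (hasDerivAt_uwCdf hρ.1 hμ hy)).congr_deriv ?_
  simp only [uwDensity, uwCdf, uwExponent]
  field_simp
  ring

theorem tendsto_uwExponent_sub_mul_uwCdf_nhdsGT_zero (hρ : ρ ∈ Ioo (0 : ℝ) 1)
    (hμ : μ ∈ Ioo (0 : ℝ) 1) (hlam : 0 < lam) :
    Tendsto (fun y => (uwExponent μ lam y - (log ρ)⁻¹) * uwCdf ρ μ lam y) (𝓝[>] 0) (𝓝 0) :=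
  (tendsto_sub_mul_rpow_atTop hρ _).comp (tendsto_uwExponent_nhdsGT_zero hμ hlam)

theorem tendsto_uwExponent_sub_mul_uwCdf_nhds_one (hρ : 0 < ρ) (hlam : 0 < lam) :
    Tendsto (fun y => (uwExponent μ lam y - (log ρ)⁻¹) * uwCdf ρ μ lam y) (𝓝 1)
      (𝓝 (-(log ρ)⁻¹)) := by
  simpa using ((tendsto_uwExponent_nhds_one hlam).sub_const (log ρ)⁻¹).mul
    (tendsto_uwCdf_nhds_one (μ := μ) hρ hlam)

theorem intervalIntegrable_uwExponent_mul_uwDensity (hρ : ρ ∈ Ioo (0 : ℝ) 1)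
    (hμ : μ ∈ Ioo (0 : ℝ) 1) (hlam : 0 < lam) :
    IntervalIntegrable (fun y => uwExponent μ lam y * uwDensity ρ μ lam y) volume 0 1 :=
  intervalIntegral.intervalIntegrable_deriv_of_nonneg_of_tendsto zero_lt_one
    (fun _ hy => hasDerivAt_uwExponent_sub_mul_uwCdf hρ hμ hy)
    (fun _ hy => mul_nonneg (rpow_nonneg (log_div_log_pos hμ hy).le _)
      (uwDensity_nonneg hρ hμ hlam.le hy))
    (tendsto_uwExponent_sub_mul_uwCdf_nhdsGT_zero hρ hμ hlam)
    ((tendsto_uwExponent_sub_mul_uwCdf_nhds_one hρ.1 hlam).mono_left nhdsWithin_le_nhds)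

theorem integral_uwExponent_mul_uwDensity (hρ : ρ ∈ Ioo (0 : ℝ) 1) (hμ : μ ∈ Ioo (0 : ℝ) 1)
    (hlam : 0 < lam) :
    ∫ y in (0 : ℝ)..1, uwExponent μ lam y * uwDensity ρ μ lam y = -(log ρ)⁻¹ := by
  rw [intervalIntegral.integral_eq_sub_of_hasDerivAt_of_tendsto zero_lt_one
    (fun _ hy => hasDerivAt_uwExponent_sub_mul_uwCdf hρ hμ hy)
    (intervalIntegrable_uwExponent_mul_uwDensity hρ hμ hlam)
    (tendsto_uwExponent_sub_mul_uwCdf_nhdsGT_zero hρ hμ hlam)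
    ((tendsto_uwExponent_sub_mul_uwCdf_nhds_one hρ.1 hlam).mono_left nhdsWithin_le_nhds), sub_zero]

end UnitWeibull

theorem uw_expected_second_derivative_mu
    (ρ μ lam : ℝ) (hρ : ρ ∈ Set.Ioo (0:ℝ) 1) (hμ : μ ∈ Set.Ioo (0:ℝ) 1) (hlam : 0 < lam) :
    ∫ y in (0:ℝ)..1,
      ((lam * (Real.log μ + 1) * (1 + Real.log ρ * (Real.log y / Real.log μ) ^ lam)
          + lam ^ 2 * Real.log ρ * (Real.log y / Real.log μ) ^ lam)
        / (μ ^ 2 * (Real.log μ) ^ 2)) *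
        ((lam / y) * (Real.log ρ / Real.log μ) *
          (Real.log y / Real.log μ) ^ (lam - 1) *
          ρ ^ ((Real.log y / Real.log μ) ^ lam))
      = -lam ^ 2 / (μ ^ 2 * (Real.log μ) ^ 2) := by
  set c := μ ^ 2 * (log μ) ^ 2
  have hlogρ : log ρ ≠ 0 := (log_neg hρ.1 hρ.2).ne
  have haffine : ∀ y, ((lam * (log μ + 1) * (1 + log ρ * (log y / log μ) ^ lam)
          + lam ^ 2 * log ρ * (log y / log μ) ^ lam) / c) *
        ((lam / y) * (log ρ / log μ) * (log y / log μ) ^ (lam - 1) *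
          ρ ^ ((log y / log μ) ^ lam))
      = lam * (log μ + 1) / c * uwDensity ρ μ lam y
        + (lam * (log μ + 1) + lam ^ 2) * log ρ / c *
          (uwExponent μ lam y * uwDensity ρ μ lam y) :=
    fun y => by simp only [uwDensity, uwExponent]; ring
  simp_rw [haffine]
  rw [intervalIntegral.integral_add
      ((intervalIntegrable_uwDensity hρ hμ hlam).const_mul _)
      ((intervalIntegrable_uwExponent_mul_uwDensity hρ hμ hlam).const_mul _),
    intervalIntegral.integral_const_mul, intervalIntegral.integral_const_mul,
    integral_uwDensity hρ hμ hlam, integral_uwExponent_mul_uwDensity hρ hμ hlam]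
  field_simp
  ring
end

section
/- Expected cross derivative of the UW log-likelihood: if Y ~ UW(μ, λ; ρ) and A = log Y / log μ, then E[1 + log(ρ)·A^λ + λ·log(ρ)·A^λ·log(A)] = −(1 − κ − log(−log ρ)) = κ + log(−log ρ) − 1. -/
open Real Set MeasureTheory

lemma integral_mul_log_mul_exp_neg_s16 :
    ∫ u in Set.Ioi (0:ℝ), u * Real.log u * Real.exp (-u)
      = 1 - Real.eulerMascheroniConstant := by
  have h1 := Complex.hasDerivAt_GammaIntegral (s := 2) (by norm_num)
  have hev : Complex.GammaIntegral =ᶠ[nhds (2:ℂ)] Complex.Gamma := by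
    have hopen : IsOpen {z : ℂ | 0 < z.re} := isOpen_lt continuous_const Complex.continuous_re
    refine Filter.eventuallyEq_of_mem (hopen.mem_nhds (by norm_num)) fun z hz => ?_
    exact (Complex.Gamma_eq_integral hz).symm
  have hG : HasDerivAt Complex.Gamma
      (((1 : ℝ) - Real.eulerMascheroniConstant : ℝ) : ℂ) 2 := by
    have := Complex.hasDerivAt_Gamma_nat 1
    have h2 : ((2:ℂ)) = ((1:ℕ) + 1 : ℂ) := by norm_num
    rw [h2]
    convert this using 1
    norm_num [harmonic_succ]
    push_cast
    ring
  have h2 : HasDerivAt Complex.GammaIntegral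
      (((1 : ℝ) - Real.eulerMascheroniConstant : ℝ) : ℂ) 2 :=
    hG.congr_of_eventuallyEq hev
  have key := h1.unique h2
  have : (∫ t : ℝ in Ioi 0, ((t * Real.log t * Real.exp (-t) : ℝ) : ℂ))
      = (((1 : ℝ) - Real.eulerMascheroniConstant : ℝ) : ℂ) := by
    rw [← key]
    refine setIntegral_congr_fun measurableSet_Ioi fun t ht => ?_
    have ht0 : (0:ℝ) < t := ht
    rw [show (2 - 1 : ℂ) = 1 by norm_num, Complex.cpow_one]
    push_cast
    ring
  rw [show (∫ t in Ioi (0:ℝ), ((t * Real.log t * Real.exp (-t) : ℝ) : ℂ))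
        = ((∫ t in Ioi (0:ℝ), t * Real.log t * Real.exp (-t) : ℝ) : ℂ) from integral_ofReal]
    at this
  exact_mod_cast this

lemma intA : MeasureTheory.IntegrableOn (fun u : ℝ => Real.exp (-u)) (Set.Ioi 0) := by
  simpa using exp_neg_integrableOn_Ioi 0 (zero_lt_one)

lemma intB : MeasureTheory.IntegrableOn (fun u : ℝ => u * Real.exp (-u)) (Set.Ioi 0) := by
  have := Real.GammaIntegral_convergent (s := 2) (by norm_num)
  refine this.congr_fun (fun u hu => ?_) measurableSet_Ioi
  have : (0:ℝ) < u := hu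
  simp only [show (2:ℝ) - 1 = 1 by norm_num, Real.rpow_one]
  ring

lemma valB : ∫ u in Set.Ioi (0:ℝ), u * Real.exp (-u) = 1 := by
  have h := Real.Gamma_eq_integral (s := 2) (by norm_num)
  rw [Real.Gamma_two] at h
  rw [h]
  refine setIntegral_congr_fun measurableSet_Ioi fun u hu => ?_
  rw [show (2:ℝ) - 1 = 1 by norm_num, Real.rpow_one]
  ring

lemma intC : MeasureTheory.IntegrableOn (fun u : ℝ => u * Real.log u * Real.exp (-u)) (Set.Ioi 0) := by
  have hg : MeasureTheory.IntegrableOn (fun u : ℝ => Real.exp (-u) + Real.exp (-u) * u ^ (3-1:ℝ)) (Set.Ioi 0) :=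
    intA.add (Real.GammaIntegral_convergent (by norm_num))
  refine MeasureTheory.Integrable.mono' hg ?_ ?_
  · refine (ContinuousOn.aestronglyMeasurable ?_ measurableSet_Ioi)
    exact ((continuousOn_id.mul (Real.continuousOn_log.mono (fun x hx => ne_of_gt hx))).mul
      (Real.continuous_exp.comp continuous_neg).continuousOn)
  · refine (MeasureTheory.ae_restrict_iff' measurableSet_Ioi).2 (Filter.Eventually.of_forall fun u hu => ?_)
    have hu0 : (0:ℝ) < u := hu
    have he : (0:ℝ) < Real.exp (-u) := Real.exp_pos _
    rw [Real.norm_eq_abs, abs_mul, abs_of_pos he]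
    have key : |u * Real.log u| ≤ 1 + u ^ (2:ℝ) := by
      rcases le_or_gt u 1 with h1 | h1
      · have : |Real.log u| = -Real.log u := by
          rw [abs_of_nonpos (Real.log_nonpos hu0.le h1)]
        rw [abs_mul, abs_of_pos hu0, this]
        have hlog : -Real.log u ≤ u⁻¹ := by
          have := Real.add_one_le_exp (Real.log u⁻¹)
          rw [Real.exp_log (by positivity)] at this
          rw [Real.log_inv] at this
          linarith
        have : u * -Real.log u ≤ u * u⁻¹ := by
          exact mul_le_mul_of_nonneg_left hlog hu0.le
        rw [mul_inv_cancel₀ hu0.ne'] at this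
        have h2 : (0:ℝ) ≤ u ^ (2:ℝ) := Real.rpow_nonneg hu0.le _
        linarith
      · have hl : Real.log u ≤ u := (Real.log_le_sub_one_of_pos hu0).trans (by linarith)
        have hl0 : 0 ≤ Real.log u := Real.log_nonneg h1.le
        rw [abs_mul, abs_of_pos hu0, abs_of_nonneg hl0]
        have : u * Real.log u ≤ u * u := mul_le_mul_of_nonneg_left hl hu0.le
        rw [show u ^ (2:ℝ) = u * u by rw [Real.rpow_two]; ring]
        linarith
    have h32 : u ^ ((3:ℝ)-1) = u ^ (2:ℝ) := by norm_num
    calc |u * Real.log u| * Real.exp (-u) ≤ (1 + u ^ (2:ℝ)) * Real.exp (-u) :=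
          mul_le_mul_of_nonneg_right key he.le
      _ = Real.exp (-u) + Real.exp (-u) * u ^ ((3:ℝ)-1) := by rw [h32]; ring

lemma valG (C : ℝ) :
    ∫ u in Set.Ioi (0:ℝ),
      (Real.exp (-u) + (C - 1) * (u * Real.exp (-u)) - u * Real.log u * Real.exp (-u))
      = Real.eulerMascheroniConstant + C - 1 := by
  have h1 : ∫ u in Set.Ioi (0:ℝ),
      (Real.exp (-u) + (C - 1) * (u * Real.exp (-u)) - u * Real.log u * Real.exp (-u))
      = (∫ u in Set.Ioi (0:ℝ), (Real.exp (-u) + (C - 1) * (u * Real.exp (-u))))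
        - ∫ u in Set.Ioi (0:ℝ), u * Real.log u * Real.exp (-u) :=
    MeasureTheory.integral_sub (intA.add (intB.const_mul _)) intC
  have h2 : ∫ u in Set.Ioi (0:ℝ), (Real.exp (-u) + (C - 1) * (u * Real.exp (-u)))
      = (∫ u in Set.Ioi (0:ℝ), Real.exp (-u))
        + ∫ u in Set.Ioi (0:ℝ), (C - 1) * (u * Real.exp (-u)) :=
    MeasureTheory.integral_add intA (intB.const_mul _)
  rw [h1, h2, MeasureTheory.integral_const_mul, integral_exp_neg_Ioi_zero, valB,
      integral_mul_log_mul_exp_neg_s16]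
  ring

theorem uw_expected_cross_derivative
    (ρ μ lam : ℝ) (hρ : ρ ∈ Set.Ioo (0:ℝ) 1) (hμ : μ ∈ Set.Ioo (0:ℝ) 1) (hlam : 0 < lam) :
    ∫ y in (0:ℝ)..1,
      (1 + Real.log ρ * (Real.log y / Real.log μ) ^ lam
         + lam * Real.log ρ * (Real.log y / Real.log μ) ^ lam *
             Real.log (Real.log y / Real.log μ)) *
        ((lam / y) * (Real.log ρ / Real.log μ) *
          (Real.log y / Real.log μ) ^ (lam - 1) *
          ρ ^ ((Real.log y / Real.log μ) ^ lam))
      = Real.eulerMascheroniConstant + Real.log (-Real.log ρ) - 1 := by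
  obtain ⟨hρ0, hρ1⟩ := hρ
  obtain ⟨hμ0, hμ1⟩ := hμ
  set c := Real.log ρ with hc
  set m := Real.log μ with hm
  have hc0 : c < 0 := Real.log_neg hρ0 hρ1
  have hm0 : m < 0 := Real.log_neg hμ0 hμ1
  set g : ℝ → ℝ := fun u =>
    Real.exp (-u) + (Real.log (-c) - 1) * (u * Real.exp (-u)) - u * Real.log u * Real.exp (-u)
    with hg
  set φ : ℝ → ℝ := fun y => -c * (Real.log y / m) ^ lam with hφ
  set φ' : ℝ → ℝ := fun y => -c * (lam * (Real.log y / m) ^ (lam - 1) * (y⁻¹ / m)) with hφ'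
  -- basic facts on Ioo 0 1
  have ha_pos : ∀ y ∈ Set.Ioo (0:ℝ) 1, 0 < Real.log y / m := fun y hy =>
    div_pos_of_neg_of_neg (Real.log_neg hy.1 hy.2) hm0
  have hφ_pos : ∀ y ∈ Set.Ioo (0:ℝ) 1, 0 < φ y := fun y hy =>
    mul_pos (by linarith) (Real.rpow_pos_of_pos (ha_pos y hy) _)
  -- derivative
  have hderiv : ∀ y ∈ Set.Ioo (0:ℝ) 1, HasDerivWithinAt φ (φ' y) (Set.Ioo 0 1) y := by
    intro y hy
    have hy0 : (0:ℝ) < y := hy.1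
    have h1 : HasDerivAt (fun y => Real.log y / m) (y⁻¹ / m) y :=
      (Real.hasDerivAt_log hy0.ne').div_const m
    have h2 : HasDerivAt (fun x : ℝ => x ^ lam)
        (lam * (Real.log y / m) ^ (lam - 1)) (Real.log y / m) :=
      Real.hasDerivAt_rpow_const (Or.inl (ha_pos y hy).ne')
    have h3 : HasDerivAt (fun y => (Real.log y / m) ^ lam)
        (lam * (Real.log y / m) ^ (lam - 1) * (y⁻¹ / m)) y := by have := h2.comp y h1; exact this
    exact (h3.const_mul (-c)).hasDerivWithinAt
  -- injectivity via explicit left inverse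
  have hinv : ∀ y ∈ Set.Ioo (0:ℝ) 1, Real.exp (m * (φ y / -c) ^ lam⁻¹) = y := by
    intro y hy
    have ha := ha_pos y hy
    have hc' : (-c) ≠ 0 := by linarith
    rw [hφ]
    simp only
    rw [mul_div_cancel_left₀ _ hc', ← Real.rpow_mul ha.le,
        mul_inv_cancel₀ hlam.ne', Real.rpow_one,
        mul_div_cancel₀ _ (ne_of_lt hm0), Real.exp_log hy.1]
  have hinj : Set.InjOn φ (Set.Ioo 0 1) := fun y1 h1 y2 h2 heq => by
    rw [← hinv y1 h1, ← hinv y2 h2, heq]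
  -- image
  have himg : φ '' Set.Ioo 0 1 = Set.Ioi 0 := by
    apply Set.eq_of_subset_of_subset
    · rintro u ⟨y, hy, rfl⟩
      exact hφ_pos y hy
    · intro u hu
      have hu0 : (0:ℝ) < u := hu
      have hc' : (0:ℝ) < -c := by linarith
      refine ⟨Real.exp (m * (u / -c) ^ lam⁻¹), ⟨Real.exp_pos _, ?_⟩, ?_⟩
      · rw [Real.exp_lt_one_iff]
        have : (0:ℝ) < (u / -c) ^ lam⁻¹ := Real.rpow_pos_of_pos (div_pos hu0 hc') _
        exact mul_neg_of_neg_of_pos hm0 this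
      · rw [hφ]
        simp only
        rw [Real.log_exp, mul_div_cancel_left₀ _ (ne_of_lt hm0),
            ← Real.rpow_mul (div_pos hu0 hc').le, inv_mul_cancel₀ hlam.ne',
            Real.rpow_one, mul_div_cancel₀ _ hc'.ne']
  -- substitution
  have hsub := MeasureTheory.integral_image_eq_integral_abs_deriv_smul
    measurableSet_Ioo hderiv hinj g
  rw [himg] at hsub
  -- pointwise identity
  have hpt : ∀ y ∈ Set.Ioo (0:ℝ) 1,
      |φ' y| • g (φ y)
        = (1 + c * (Real.log y / m) ^ lam
            + lam * c * (Real.log y / m) ^ lam * Real.log (Real.log y / m)) *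
          ((lam / y) * (c / m) * (Real.log y / m) ^ (lam - 1) * ρ ^ ((Real.log y / m) ^ lam)) := by
    intro y hy
    have hy0 : (0:ℝ) < y := hy.1
    have ha := ha_pos y hy
    set a := Real.log y / m with hA
    have hal : (0:ℝ) < a ^ lam := Real.rpow_pos_of_pos ha _
    have hc' : (0:ℝ) < -c := by linarith
    have habs : |φ' y| = c * (lam * a ^ (lam - 1) * (y⁻¹ / m)) := by
      rw [hφ']
      simp only
      rw [abs_of_nonpos ?_]
      · ring
      · have h1 : (0:ℝ) < lam * a ^ (lam - 1) :=
          mul_pos hlam (Real.rpow_pos_of_pos ha _)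
        have h2 : y⁻¹ / m < 0 := div_neg_of_pos_of_neg (inv_pos.2 hy0) hm0
        exact (mul_neg_of_pos_of_neg hc' (mul_neg_of_pos_of_neg h1 h2)).le
    have hexp : Real.exp (-φ y) = ρ ^ (a ^ lam) := by
      rw [Real.rpow_def_of_pos hρ0, hφ]
      simp only
      congr 1
      ring
    have hlog : Real.log (φ y) = Real.log (-c) + lam * Real.log a := by
      rw [hφ]
      simp only
      rw [Real.log_mul hc'.ne' hal.ne', Real.log_rpow ha]
    rw [smul_eq_mul, habs, hg]
    simp only
    rw [hexp, hlog, hφ]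
    simp only
    field_simp
    ring
  rw [intervalIntegral.integral_of_le zero_le_one, MeasureTheory.integral_Ioc_eq_integral_Ioo,
      MeasureTheory.setIntegral_congr_fun measurableSet_Ioo (fun y hy => (hpt y hy).symm),
      ← hsub]
  exact valG _
end
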